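/- arXiv:2508.19680 — 2 statements merged into one kernel-verified Lean document; each statement's English description precedes it below -/
import Mathlib

section
/- For the function u(x,t) = (1-t)^{-1/2} exp(x²/(4(1-t))) on ℝ × (0,1), there do not exist positive constants C and c such that u(x,t)/u(0,t) ≤ C·exp(c x²/t) for all x ∈ ℝ and t ∈ (1/2, 1). -/
/-!
At `x = 1` the quotient is `exp (1 / (4 * (1 - t)))`, which blows up as `t → 1⁻`, whereas for
`t > 1/2` the proposed bound stays below `C * exp (2 * c)`.
-/

open Real Filter Topology

noncomputable def backwardHeatSolution (x t : ℝ) : ℝ :=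
  (1 - t) ^ (-(1:ℝ)/2) * exp (x ^ 2 / (4 * (1 - t)))

lemma backwardHeatSolution_div_zero {t : ℝ} (ht : t < 1) (x : ℝ) :
    backwardHeatSolution x t / backwardHeatSolution 0 t = exp (x ^ 2 / (4 * (1 - t))) := by
  have hpow : (1 - t) ^ (-(1:ℝ)/2) ≠ 0 := (rpow_pos_of_pos (sub_pos.2 ht) _).ne'
  simp [backwardHeatSolution, hpow]

lemma tendsto_sq_div_four_mul_one_sub_nhdsLT {x : ℝ} (hx : x ≠ 0) :
    Tendsto (fun t : ℝ => x ^ 2 / (4 * (1 - t))) (𝓝[<] 1) atTop := by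
  have hden : Tendsto (fun t : ℝ => 4 * (1 - t)) (𝓝[<] 1) (𝓝[>] 0) := by
    refine tendsto_nhdsWithin_iff.2 ⟨?_, ?_⟩
    · have : Tendsto (fun t : ℝ => 4 * (1 - t)) (𝓝 1) (𝓝 (4 * (1 - 1))) :=
        (continuous_const.mul (continuous_const.sub continuous_id)).tendsto 1
      simpa using this.mono_left nhdsWithin_le_nhds
    · filter_upwards [self_mem_nhdsWithin] with t ht
      simpa using ht
  simpa only [div_eq_mul_inv, Pi.inv_apply] using
    hden.inv_tendsto_nhdsGT_zero.const_mul_atTop (by positivity : 0 < x ^ 2)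

lemma div_le_two_mul_of_half_lt {a t : ℝ} (ha : 0 ≤ a) (ht : 1/2 < t) : a / t ≤ 2 * a := by
  rw [div_le_iff₀ (by linarith)]
  nlinarith

/-- For u(x,t) = (1-t)^{-1/2} exp(x²/(4(1-t))) on ℝ × (0,1), there do not exist positive
constants C and c such that u(x,t)/u(0,t) ≤ C·exp(c x²/t) for all x ∈ ℝ and t ∈ (1/2, 1). -/
theorem stmt_1 :
    ¬ ∃ C c : ℝ, 0 < C ∧ 0 < c ∧
      ∀ x t : ℝ, 1/2 < t → t < 1 →
        ((1 - t) ^ (-(1:ℝ)/2) * Real.exp (x ^ 2 / (4 * (1 - t)))) /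
          ((1 - t) ^ (-(1:ℝ)/2) * Real.exp ((0:ℝ) ^ 2 / (4 * (1 - t)))) ≤
        C * Real.exp (c * x ^ 2 / t) := by
  rintro ⟨C, c, hC, hc, hbound⟩
  have hblowup : ∀ᶠ t in 𝓝[<] 1, C * exp (2 * c) < exp ((1:ℝ) ^ 2 / (4 * (1 - t))) :=
    (tendsto_exp_atTop.comp
      (tendsto_sq_div_four_mul_one_sub_nhdsLT one_ne_zero)).eventually_gt_atTop _
  have hnear : ∀ᶠ t in 𝓝[<] (1:ℝ), t ∈ Set.Ioo (1/2) 1 := Ioo_mem_nhdsLT (by norm_num)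
  obtain ⟨t, ⟨ht_gt, ht_lt⟩, hlt⟩ := (hnear.and hblowup).exists
  have hle : exp ((1:ℝ) ^ 2 / (4 * (1 - t))) ≤ C * exp (2 * c) :=
    calc exp ((1:ℝ) ^ 2 / (4 * (1 - t)))
        = backwardHeatSolution 1 t / backwardHeatSolution 0 t :=
          (backwardHeatSolution_div_zero ht_lt 1).symm
      _ ≤ C * exp (c * 1 ^ 2 / t) := hbound 1 t ht_gt ht_lt
      _ ≤ C * exp (2 * c) := by
          gcongr
          simpa using div_le_two_mul_of_half_lt hc.le ht_gt
  exact hlt.not_ge hle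
end

section
/- Let u : ℝⁿ × (0,T) → (0,∞) be a smooth positive solution of the heat equation ∂ₜu = Δu. Then the quantity w = |∇u|²/u satisfies (∂ₜ - Δ)w = -(2/u)·|∇²u - (∇u ⊗ ∇u)/u|² at every point, where |·| is the Frobenius norm of the matrix ∇²u - (∇u ⊗ ∇u)/u. -/
open Real

/-- Partial derivative of f : ℝⁿ → ℝ at x in the i-th coordinate direction. -/
noncomputable def pd {n : ℕ} (f : EuclideanSpace ℝ (Fin n) → ℝ)
    (x : EuclideanSpace ℝ (Fin n)) (i : Fin n) : ℝ :=
  fderiv ℝ f x (EuclideanSpace.single i 1)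

/-- The Euclidean Laplacian of f : ℝⁿ → ℝ as the sum of second partial derivatives. -/
noncomputable def lap {n : ℕ} (f : EuclideanSpace ℝ (Fin n) → ℝ)
    (x : EuclideanSpace ℝ (Fin n)) : ℝ :=
  ∑ i : Fin n, pd (fun y => pd f y i) x i

noncomputable def Dv {X : Type*} [NormedAddCommGroup X] [NormedSpace ℝ X]
    (v : X) (g : X → ℝ) : X → ℝ := fun p => fderiv ℝ g p v

variable {X : Type*} [NormedAddCommGroup X] [NormedSpace ℝ X]

theorem Dv_contDiff {g : X → ℝ} (hg : ContDiff ℝ (⊤ : ℕ∞) g) (v : X) :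
    ContDiff ℝ (⊤ : ℕ∞) (Dv v g) :=
  (hg.fderiv_right (by simp)).clm_apply contDiff_const

theorem Dv_swap {g : X → ℝ} (hg : ContDiff ℝ (⊤ : ℕ∞) g) (v w : X) (p : X) :
    Dv v (Dv w g) p = Dv w (Dv v g) p := by
  have hd : DifferentiableAt ℝ (fderiv ℝ g) p :=
    ((hg.fderiv_right (m := (⊤ : ℕ∞)) (by simp)).differentiable (by simp)).differentiableAt
  have h1 : ∀ (a b : X), Dv a (Dv b g) p = fderiv ℝ (fderiv ℝ g) p a b := by
    intro a b
    have : Dv b g = fun q => (fderiv ℝ g q) b := rfl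
    rw [Dv, this]
    rw [fderiv_clm_apply hd (differentiableAt_const b)]
    simp
  rw [h1, h1]
  exact (hg.contDiffAt.isSymmSndFDerivAt (by rw [minSmoothness_of_isRCLikeNormedField]; exact WithTop.coe_le_coe.mpr le_top)) v w

theorem Dv_sum {ι : Type*} (s : Finset ι) {g : ι → X → ℝ}
    (hg : ∀ i, ContDiff ℝ (⊤ : ℕ∞) (g i)) (v : X) (p : X) :
    Dv v (fun q => ∑ i ∈ s, g i q) p = ∑ i ∈ s, Dv v (g i) p := by
  rw [Dv, fderiv_fun_sum (fun i _ => ((hg i).differentiable (by simp)).differentiableAt)]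
  simp [Dv]

theorem Dv_mul {g h : X → ℝ} (hg : ContDiff ℝ (⊤ : ℕ∞) g) (hh : ContDiff ℝ (⊤ : ℕ∞) h) (v : X) (p : X) :
    Dv v (fun q => g q * h q) p = Dv v g p * h p + g p * Dv v h p := by
  rw [Dv, fderiv_fun_mul ((hg.differentiable (by simp)).differentiableAt)
    ((hh.differentiable (by simp)).differentiableAt)]
  simp [Dv]; ring

theorem Dv_inv {h : X → ℝ} (hh : ContDiff ℝ (⊤ : ℕ∞) h) (v : X) (p : X) (hp : h p ≠ 0) :
    Dv v (fun q => (h q)⁻¹) p = -Dv v h p / h p ^ 2 := by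
  have h1 := (hasDerivAt_inv hp).hasFDerivAt
  have h2 := h1.comp p ((hh.differentiable (by simp)) p).hasFDerivAt
  have h3 : HasFDerivAt (fun q => (h q)⁻¹)
      ((ContinuousLinearMap.smulRight 1 (-(h p ^ 2)⁻¹)).comp (fderiv ℝ h p)) p := h2
  rw [Dv, h3.fderiv]
  simp [Dv]
  field_simp

theorem Dv_div {g h : X → ℝ} (hg : ContDiff ℝ (⊤ : ℕ∞) g) (hh : ContDiff ℝ (⊤ : ℕ∞) h) (v : X) (p : X)
    (h0 : ∀ q, h q ≠ 0) :
    Dv v (fun q => g q / h q) p = (Dv v g p * h p - g p * Dv v h p) / (h p) ^ 2 := by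
  have hp := h0 p
  have hinv : ContDiff ℝ (⊤ : ℕ∞) (fun q => (h q)⁻¹) := hh.inv h0
  have : (fun q => g q / h q) = fun q => g q * (h q)⁻¹ := by funext q; rw [div_eq_mul_inv]
  rw [this, Dv_mul hg hinv, Dv_inv hh v p hp]
  field_simp
  ring

theorem Dv_sq {g : X → ℝ} (hg : ContDiff ℝ (⊤ : ℕ∞) g) (v : X) (p : X) :
    Dv v (fun q => g q ^ 2) p = 2 * g p * Dv v g p := by
  have : (fun q => g q ^ 2) = fun q => g q * g q := by funext q; ring
  rw [this, Dv_mul hg hg]; ring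

theorem Dv_congr {g h : X → ℝ} {s : Set X} (hs : IsOpen s) (heq : ∀ q ∈ s, g q = h q)
    {p : X} (hp : p ∈ s) (v : X) : Dv v g p = Dv v h p := by
  have : g =ᶠ[nhds p] h := Filter.eventuallyEq_of_mem (hs.mem_nhds hp) heq
  rw [Dv, Dv, this.fderiv_eq]

theorem Dv_sub {g h : X → ℝ} (hg : ContDiff ℝ (⊤ : ℕ∞) g) (hh : ContDiff ℝ (⊤ : ℕ∞) h) (v : X) (p : X) :
    Dv v (fun q => g q - h q) p = Dv v g p - Dv v h p := by
  rw [Dv, fderiv_fun_sub ((hg.differentiable (by simp)).differentiableAt)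
    ((hh.differentiable (by simp)).differentiableAt)]
  simp [Dv]

theorem Dv_const_mul {g : X → ℝ} (hg : ContDiff ℝ (⊤ : ℕ∞) g) (a : ℝ) (v : X) (p : X) :
    Dv v (fun q => a * g q) p = a * Dv v g p := by
  rw [Dv, fderiv_const_mul ((hg.differentiable (by simp)).differentiableAt)]
  simp [Dv]

theorem algebra {n : ℕ} (a : ℝ) (ha : a ≠ 0) (B : Fin n → ℝ) (C E : Fin n → Fin n → ℝ)
    (hC : ∀ i j, C i j = C j i) :
    ((∑ i, 2 * B i * (∑ j, E i j)) * a - (∑ i, B i ^ 2) * (∑ j, C j j)) / a ^ 2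
      - ∑ j, ((((∑ i, (2 * C j i * C j i + 2 * B i * E i j)) * a
            + (∑ i, 2 * B i * C j i) * B j
            - ((∑ i, 2 * B i * C j i) * B j + (∑ i, B i ^ 2) * C j j)) * a ^ 2
          - ((∑ i, 2 * B i * C j i) * a - (∑ i, B i ^ 2) * B j) * (2 * a * B j))
          / (a ^ 2) ^ 2)
      = -(2 / a) * ∑ i, ∑ j, (C i j - B i * B j / a) ^ 2 := by
  set S := ∑ i, B i ^ 2 with hS
  set L := ∑ j : Fin n, C j j with hL
  set Q := ∑ i, B i * (∑ j, E i j) with hQ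
  set P2 := ∑ j, ∑ i, C j i ^ 2 with hP2
  set P1 := ∑ j, B j * (∑ i, B i * C j i) with hP1
  have hQ2 : (∑ i, 2 * B i * (∑ j, E i j)) = 2 * Q := by
    rw [hQ, Finset.mul_sum]
    exact Finset.sum_congr rfl fun i _ => by ring
  have hQ' : Q = ∑ j : Fin n, ∑ i : Fin n, B i * E i j := by
    rw [hQ]
    rw [show (∑ i, B i * ∑ j, E i j) = ∑ i, ∑ j, B i * E i j from
      Finset.sum_congr rfl fun i _ => Finset.mul_sum _ _ _]
    exact Finset.sum_comm
  -- per-j simplification of the Laplacian term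
  have hj : ∀ j, (((∑ i, (2 * C j i * C j i + 2 * B i * E i j)) * a
            + (∑ i, 2 * B i * C j i) * B j
            - ((∑ i, 2 * B i * C j i) * B j + S * C j j)) * a ^ 2
          - ((∑ i, 2 * B i * C j i) * a - S * B j) * (2 * a * B j))
          / (a ^ 2) ^ 2
      = (2 * (∑ i, C j i ^ 2) * a ^ 3 + 2 * (∑ i, B i * E i j) * a ^ 3
          - S * C j j * a ^ 2 - 4 * B j * (∑ i, B i * C j i) * a ^ 2
          + 2 * S * B j ^ 2 * a) / a ^ 4 := by
    intro j
    have e1 : (∑ i, (2 * C j i * C j i + 2 * B i * E i j))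
        = 2 * (∑ i, C j i ^ 2) + 2 * (∑ i, B i * E i j) := by
      rw [Finset.sum_add_distrib, Finset.mul_sum, Finset.mul_sum]
      congr 1 <;> exact Finset.sum_congr rfl fun i _ => by ring
    have e2 : (∑ i, 2 * B i * C j i) = 2 * (∑ i, B i * C j i) := by
      rw [Finset.mul_sum]
      exact Finset.sum_congr rfl fun i _ => by ring
    rw [e1, e2]
    field_simp
    ring
  rw [Finset.sum_congr rfl fun j _ => hj j, ← Finset.sum_div]
  have hsum : (∑ j, (2 * (∑ i, C j i ^ 2) * a ^ 3 + 2 * (∑ i, B i * E i j) * a ^ 3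
          - S * C j j * a ^ 2 - 4 * B j * (∑ i, B i * C j i) * a ^ 2
          + 2 * S * B j ^ 2 * a))
      = 2 * P2 * a ^ 3 + 2 * Q * a ^ 3 - S * L * a ^ 2 - 4 * P1 * a ^ 2
          + 2 * S * S * a := by
    have h2 : ∑ j, 2 * (∑ i, C j i ^ 2) * a ^ 3 = 2 * P2 * a ^ 3 := by
      rw [← Finset.sum_mul, ← Finset.mul_sum]
    have h3 : ∑ j, 2 * (∑ i, B i * E i j) * a ^ 3 = 2 * Q * a ^ 3 := by
      rw [← Finset.sum_mul, ← Finset.mul_sum, ← hQ']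
    have h4 : ∑ j, S * C j j * a ^ 2 = S * L * a ^ 2 := by
      rw [← Finset.sum_mul, ← Finset.mul_sum]
    have h5 : ∑ j, 4 * B j * (∑ i, B i * C j i) * a ^ 2 = 4 * P1 * a ^ 2 := by
      rw [← Finset.sum_mul]
      congr 1
      rw [Finset.mul_sum]
      exact Finset.sum_congr rfl fun j _ => by ring
    have h6 : ∑ j, 2 * S * B j ^ 2 * a = 2 * S * S * a := by
      rw [← Finset.sum_mul, ← Finset.mul_sum, ← hS]
    calc ∑ j, (2 * (∑ i, C j i ^ 2) * a ^ 3 + 2 * (∑ i, B i * E i j) * a ^ 3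
          - S * C j j * a ^ 2 - 4 * B j * (∑ i, B i * C j i) * a ^ 2
          + 2 * S * B j ^ 2 * a)
        = (∑ j, 2 * (∑ i, C j i ^ 2) * a ^ 3) + (∑ j, 2 * (∑ i, B i * E i j) * a ^ 3)
          - (∑ j, S * C j j * a ^ 2) - (∑ j, 4 * B j * (∑ i, B i * C j i) * a ^ 2)
          + (∑ j, 2 * S * B j ^ 2 * a) := by
          rw [Finset.sum_add_distrib, Finset.sum_sub_distrib, Finset.sum_sub_distrib,
            Finset.sum_add_distrib]
      _ = _ := by rw [h2, h3, h4, h5, h6]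
  rw [hsum, hQ2]
  -- expand the RHS double sum
  have hR : ∑ i, ∑ j, (C i j - B i * B j / a) ^ 2
      = P2 - 2 * P1 / a + S * S / a ^ 2 := by
    have hRa : ∀ i j : Fin n, (C i j - B i * B j / a) ^ 2
        = C i j ^ 2 - B i * C j i * (2 * B j / a) + B j ^ 2 * (B i ^ 2 / a ^ 2) := by
      intro i j
      rw [hC i j]
      field_simp
      ring
    rw [Finset.sum_congr rfl fun i _ => Finset.sum_congr rfl fun j _ => hRa i j]
    have hsplit : ∀ i : Fin n, ∑ j, (C i j ^ 2 - B i * C j i * (2 * B j / a)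
          + B j ^ 2 * (B i ^ 2 / a ^ 2))
        = (∑ j, C i j ^ 2) - (∑ j, B i * C j i * (2 * B j / a))
          + (∑ j, B j ^ 2 * (B i ^ 2 / a ^ 2)) := by
      intro i
      rw [Finset.sum_add_distrib, Finset.sum_sub_distrib]
    rw [Finset.sum_congr rfl fun i _ => hsplit i]
    rw [Finset.sum_add_distrib, Finset.sum_sub_distrib]
    have d1 : ∑ i, ∑ j, C i j ^ 2 = P2 := by
      rw [hP2]
    have d2 : ∑ i : Fin n, ∑ j, B i * C j i * (2 * B j / a) = 2 * P1 / a := by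
      rw [Finset.sum_comm]
      have dper : ∀ j : Fin n, ∑ i, B i * C j i * (2 * B j / a)
          = B j * (∑ i, B i * C j i) * (2 / a) := by
        intro j
        rw [← Finset.sum_mul]
        rw [show B j * (∑ i, B i * C j i) * (2 / a)
          = (∑ i, B i * C j i) * (2 * B j / a) from by ring]
      rw [Finset.sum_congr rfl fun j _ => dper j, ← Finset.sum_mul, ← hP1]
      ring
    have d3 : ∑ i : Fin n, ∑ j, B j ^ 2 * (B i ^ 2 / a ^ 2) = S * S / a ^ 2 := by
      have dper : ∀ i : Fin n, ∑ j, B j ^ 2 * (B i ^ 2 / a ^ 2)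
          = S * (B i ^ 2 / a ^ 2) := by
        intro i
        rw [← Finset.sum_mul, ← hS]
      rw [Finset.sum_congr rfl fun i _ => dper i]
      rw [Finset.sum_congr rfl fun i (_ : i ∈ Finset.univ) =>
        (show S * (B i ^ 2 / a ^ 2) = B i ^ 2 * (S / a ^ 2) by ring)]
      rw [← Finset.sum_mul, ← hS]
      ring
    rw [d1, d2, d3]
  rw [hR]
  field_simp
  ring

noncomputable def eps (n : ℕ) (i : Fin n) : EuclideanSpace ℝ (Fin n) × ℝ :=
  (EuclideanSpace.single i 1, 0)

noncomputable def tau (n : ℕ) : EuclideanSpace ℝ (Fin n) × ℝ := (0, 1)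

theorem slice_x {n : ℕ} {g : EuclideanSpace ℝ (Fin n) × ℝ → ℝ} (hg : ContDiff ℝ (⊤ : ℕ∞) g)
    (t : ℝ) (x : EuclideanSpace ℝ (Fin n)) (i : Fin n) :
    pd (fun y => g (y, t)) x i = Dv (eps n i) g (x, t) := by
  have h1 : HasFDerivAt (fun y : EuclideanSpace ℝ (Fin n) => (y, t))
      ((ContinuousLinearMap.id ℝ (EuclideanSpace ℝ (Fin n))).prod 0) x :=
    (hasFDerivAt_id x).prodMk (hasFDerivAt_const t x)
  have h2 := (((hg.differentiable (by simp)) (x, t)).hasFDerivAt).comp x h1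
  have h3 : HasFDerivAt (fun y => g (y, t))
      ((fderiv ℝ g (x, t)).comp
        ((ContinuousLinearMap.id ℝ (EuclideanSpace ℝ (Fin n))).prod 0)) x := h2
  rw [pd, h3.fderiv]
  simp [Dv, eps]

theorem slice_t {n : ℕ} {g : EuclideanSpace ℝ (Fin n) × ℝ → ℝ} (hg : ContDiff ℝ (⊤ : ℕ∞) g)
    (t : ℝ) (x : EuclideanSpace ℝ (Fin n)) :
    deriv (fun s => g (x, s)) t = Dv (tau n) g (x, t) := by
  have h1 : HasDerivAt (fun s : ℝ => ((x : EuclideanSpace ℝ (Fin n)), s))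
      ((0 : EuclideanSpace ℝ (Fin n)), (1 : ℝ)) t :=
    (hasDerivAt_const t x).prodMk (hasDerivAt_id t)
  have h2 := (((hg.differentiable (by simp)) (x, t)).hasFDerivAt).comp_hasDerivAt t h1
  have h3 : HasDerivAt (fun s => g (x, s)) ((fderiv ℝ g (x, t)) (0, 1)) t := h2
  rw [h3.deriv]
  rfl

theorem lap_slice {n : ℕ} {g : EuclideanSpace ℝ (Fin n) × ℝ → ℝ} (hg : ContDiff ℝ (⊤ : ℕ∞) g)
    (t : ℝ) (x : EuclideanSpace ℝ (Fin n)) :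
    lap (fun y => g (y, t)) x = ∑ j : Fin n, Dv (eps n j) (Dv (eps n j) g) (x, t) := by
  rw [lap]
  refine Finset.sum_congr rfl fun j _ => ?_
  have h1 : (fun y => pd (fun y' => g (y', t)) y j) = fun y => Dv (eps n j) g (y, t) :=
    funext fun y => slice_x hg t y j
  rw [h1, slice_x (Dv_contDiff hg _) t x j]

theorem key {n : ℕ} {T : ℝ} {F : EuclideanSpace ℝ (Fin n) × ℝ → ℝ}
    (hF : ContDiff ℝ (⊤ : ℕ∞) F) (hF0 : ∀ p, F p ≠ 0)
    (hheat : ∀ p : EuclideanSpace ℝ (Fin n) × ℝ, p.2 ∈ Set.Ioo (0:ℝ) T →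
      Dv (tau n) F p = ∑ j : Fin n, Dv (eps n j) (Dv (eps n j) F) p)
    {p : EuclideanSpace ℝ (Fin n) × ℝ} (hp : p.2 ∈ Set.Ioo (0:ℝ) T) :
    Dv (tau n) (fun q => (∑ i : Fin n, Dv (eps n i) F q ^ 2) / F q) p
      - ∑ j : Fin n, Dv (eps n j) (Dv (eps n j)
          (fun q => (∑ i : Fin n, Dv (eps n i) F q ^ 2) / F q)) p
      = -(2 / F p) * ∑ i : Fin n, ∑ j : Fin n,
          (Dv (eps n i) (Dv (eps n j) F) p
            - Dv (eps n i) F p * Dv (eps n j) F p / F p) ^ 2 := by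
  have hb : ∀ i, ContDiff ℝ (⊤ : ℕ∞) (Dv (eps n i) F) := fun i => Dv_contDiff hF _
  have hc : ∀ j i, ContDiff ℝ (⊤ : ℕ∞) (Dv (eps n j) (Dv (eps n i) F)) :=
    fun j i => Dv_contDiff (hb i) _
  have hN : ContDiff ℝ (⊤ : ℕ∞) (fun q => ∑ i : Fin n, Dv (eps n i) F q ^ 2) :=
    ContDiff.sum fun i _ => (hb i).pow 2
  -- generic derivative of G = (∑ |∂ᵢu|²)/u
  have hDG : ∀ (v : EuclideanSpace ℝ (Fin n) × ℝ) (q : EuclideanSpace ℝ (Fin n) × ℝ),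
      Dv v (fun q => (∑ i : Fin n, Dv (eps n i) F q ^ 2) / F q) q
        = ((∑ i : Fin n, 2 * Dv (eps n i) F q * Dv v (Dv (eps n i) F) q) * F q
            - (∑ i : Fin n, Dv (eps n i) F q ^ 2) * Dv v F q) / F q ^ 2 := by
    intro v q
    rw [Dv_div hN hF v q hF0,
      Dv_sum Finset.univ (fun i => (hb i).pow 2) v q,
      Finset.sum_congr rfl fun i (_ : i ∈ Finset.univ) => Dv_sq (hb i) v q]
  have hQfun : ∀ v : EuclideanSpace ℝ (Fin n) × ℝ,
      Dv v (fun q => (∑ i : Fin n, Dv (eps n i) F q ^ 2) / F q)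
        = fun q => ((∑ i : Fin n, 2 * Dv (eps n i) F q * Dv v (Dv (eps n i) F) q) * F q
            - (∑ i : Fin n, Dv (eps n i) F q ^ 2) * Dv v F q) / F q ^ 2 :=
    fun v => funext (hDG v)
  have hA : ∀ j, ContDiff ℝ (⊤ : ℕ∞) (fun q =>
      ∑ i : Fin n, 2 * Dv (eps n i) F q * Dv (eps n j) (Dv (eps n i) F) q) :=
    fun j => ContDiff.sum fun i _ => (contDiff_const.mul (hb i)).mul (hc j i)
  have hNum : ∀ j, ContDiff ℝ (⊤ : ℕ∞) (fun q =>
      (∑ i : Fin n, 2 * Dv (eps n i) F q * Dv (eps n j) (Dv (eps n i) F) q) * F q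
        - (∑ i : Fin n, Dv (eps n i) F q ^ 2) * Dv (eps n j) F q) :=
    fun j => ((hA j).mul hF).sub (hN.mul (hb j))
  -- symmetry of third derivatives
  have hswapfun : ∀ v w : EuclideanSpace ℝ (Fin n) × ℝ, Dv v (Dv w F) = Dv w (Dv v F) :=
    fun v w => funext fun q => Dv_swap hF v w q
  have he : ∀ i j, Dv (eps n j) (Dv (eps n j) (Dv (eps n i) F)) p
      = Dv (eps n i) (Dv (eps n j) (Dv (eps n j) F)) p := by
    intro i j
    rw [hswapfun (eps n j) (eps n i)]
    exact Dv_swap (hb j) (eps n j) (eps n i) p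
  -- time derivative of gradient via heat equation
  have hopen : IsOpen {q : EuclideanSpace ℝ (Fin n) × ℝ | q.2 ∈ Set.Ioo (0:ℝ) T} :=
    isOpen_Ioo.preimage continuous_snd
  have hmix : ∀ i, Dv (tau n) (Dv (eps n i) F) p
      = ∑ j : Fin n, Dv (eps n i) (Dv (eps n j) (Dv (eps n j) F)) p := by
    intro i
    rw [← hswapfun (eps n i) (tau n)]
    rw [Dv_congr hopen hheat hp (eps n i)]
    exact Dv_sum Finset.univ (fun j => Dv_contDiff (Dv_contDiff hF _) _) (eps n i) p
  -- Laplacian term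
  have hDelta : ∀ j, Dv (eps n j) (Dv (eps n j)
        (fun q => (∑ i : Fin n, Dv (eps n i) F q ^ 2) / F q)) p
      = ((((∑ i : Fin n, (2 * Dv (eps n j) (Dv (eps n i) F) p * Dv (eps n j) (Dv (eps n i) F) p
              + 2 * Dv (eps n i) F p * Dv (eps n i) (Dv (eps n j) (Dv (eps n j) F)) p)) * F p
            + (∑ i : Fin n, 2 * Dv (eps n i) F p * Dv (eps n j) (Dv (eps n i) F) p) * Dv (eps n j) F p
            - ((∑ i : Fin n, 2 * Dv (eps n i) F p * Dv (eps n j) (Dv (eps n i) F) p) * Dv (eps n j) F p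
              + (∑ i : Fin n, Dv (eps n i) F p ^ 2) * Dv (eps n j) (Dv (eps n j) F) p)) * F p ^ 2
          - ((∑ i : Fin n, 2 * Dv (eps n i) F p * Dv (eps n j) (Dv (eps n i) F) p) * F p
              - (∑ i : Fin n, Dv (eps n i) F p ^ 2) * Dv (eps n j) F p) * (2 * F p * Dv (eps n j) F p))
          / (F p ^ 2) ^ 2) := by
    intro j
    rw [hQfun (eps n j)]
    rw [Dv_div (hNum j) (hF.pow 2) (eps n j) p (fun q => pow_ne_zero 2 (hF0 q))]
    rw [Dv_sub ((hA j).mul hF) (hN.mul (hb j))]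
    rw [Dv_mul (hA j) hF, Dv_mul hN (hb j)]
    rw [Dv_sq hF]
    rw [Dv_sum Finset.univ (fun i => (contDiff_const.mul (hb i)).mul (hc j i)) (eps n j) p]
    rw [Dv_sum Finset.univ (fun i => (hb i).pow 2) (eps n j) p]
    rw [Finset.sum_congr rfl fun i (_ : i ∈ Finset.univ) => Dv_sq (hb i) (eps n j) p]
    rw [Finset.sum_congr rfl fun i (_ : i ∈ Finset.univ) =>
      Dv_mul (g := fun q => 2 * Dv (eps n i) F q) (contDiff_const.mul (hb i)) (hc j i) (eps n j) p]
    have hlast : ∀ i : Fin n,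
        Dv (eps n j) (fun q => 2 * Dv (eps n i) F q) p * Dv (eps n j) (Dv (eps n i) F) p
          + 2 * Dv (eps n i) F p * Dv (eps n j) (Dv (eps n j) (Dv (eps n i) F)) p
        = 2 * Dv (eps n j) (Dv (eps n i) F) p * Dv (eps n j) (Dv (eps n i) F) p
          + 2 * Dv (eps n i) F p * Dv (eps n i) (Dv (eps n j) (Dv (eps n j) F)) p := by
      intro i
      rw [Dv_const_mul (hb i) 2 (eps n j) p, he i j]
    rw [Finset.sum_congr rfl fun i _ => hlast i]
  rw [hDG (tau n) p, hheat p hp]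
  have hmix2 : ∀ i : Fin n, 2 * Dv (eps n i) F p * Dv (tau n) (Dv (eps n i) F) p
      = 2 * Dv (eps n i) F p
        * ∑ j : Fin n, Dv (eps n i) (Dv (eps n j) (Dv (eps n j) F)) p :=
    fun i => by rw [hmix i]
  rw [Finset.sum_congr rfl fun i _ => hmix2 i]
  rw [Finset.sum_congr rfl fun j _ => hDelta j]
  exact algebra (F p) (hF0 p) (fun i => Dv (eps n i) F p)
    (fun j i => Dv (eps n j) (Dv (eps n i) F) p)
    (fun i j => Dv (eps n i) (Dv (eps n j) (Dv (eps n j) F)) p)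
    (fun i j => Dv_swap hF (eps n i) (eps n j) p)

/-- Bochner identity: for a smooth positive solution u of the heat equation on ℝⁿ,
w = |∇u|²/u satisfies (∂ₜ - Δ)w = -(2/u)|∇²u - (∇u ⊗ ∇u)/u|². -/
theorem stmt_11 (n : ℕ) (hn : 1 ≤ n) (T : ℝ) (hT : 0 < T)
    (u : EuclideanSpace ℝ (Fin n) → ℝ → ℝ)
    (hsmooth : ContDiff ℝ (⊤ : ℕ∞) (fun p : EuclideanSpace ℝ (Fin n) × ℝ => u p.1 p.2))
    (hupos : ∀ x t, 0 < u x t)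
    (hheat : ∀ (x : EuclideanSpace ℝ (Fin n)), ∀ t ∈ Set.Ioo (0:ℝ) T,
      deriv (fun s => u x s) t = lap (fun y => u y t) x) :
    ∀ (x : EuclideanSpace ℝ (Fin n)), ∀ t ∈ Set.Ioo (0:ℝ) T,
      deriv (fun s => (∑ i : Fin n, (pd (fun y => u y s) x i) ^ 2) / u x s) t
        - lap (fun y => (∑ i : Fin n, (pd (fun y' => u y' t) y i) ^ 2) / u y t) x
      = -(2 / u x t) *
          ∑ i : Fin n, ∑ j : Fin n,
            (pd (fun y => pd (fun z => u z t) y j) x i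
              - pd (fun y => u y t) x i * pd (fun y => u y t) x j / u x t) ^ 2 := by
  intro x t ht
  have hF0 : ∀ p : EuclideanSpace ℝ (Fin n) × ℝ, (fun p : EuclideanSpace ℝ (Fin n) × ℝ => u p.1 p.2) p ≠ 0 :=
    fun p => (hupos p.1 p.2).ne'
  have hpd1 : ∀ (s : ℝ) (y : EuclideanSpace ℝ (Fin n)) (i : Fin n),
      pd (fun y' => u y' s) y i
        = Dv (eps n i) (fun p : EuclideanSpace ℝ (Fin n) × ℝ => u p.1 p.2) (y, s) :=
    fun s y i => slice_x hsmooth s y i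
  have hpd2 : ∀ i j : Fin n, pd (fun y => pd (fun z => u z t) y j) x i
      = Dv (eps n i) (Dv (eps n j) (fun p : EuclideanSpace ℝ (Fin n) × ℝ => u p.1 p.2)) (x, t) := by
    intro i j
    rw [show (fun y => pd (fun z => u z t) y j)
        = fun y => Dv (eps n j) (fun p : EuclideanSpace ℝ (Fin n) × ℝ => u p.1 p.2) (y, t) from
      funext fun y => hpd1 t y j]
    exact slice_x (Dv_contDiff hsmooth _) t x i
  have hheat' : ∀ q : EuclideanSpace ℝ (Fin n) × ℝ, q.2 ∈ Set.Ioo (0:ℝ) T →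
      Dv (tau n) (fun p : EuclideanSpace ℝ (Fin n) × ℝ => u p.1 p.2) q
        = ∑ j : Fin n, Dv (eps n j) (Dv (eps n j)
            (fun p : EuclideanSpace ℝ (Fin n) × ℝ => u p.1 p.2)) q := by
    intro q hq
    calc Dv (tau n) (fun p : EuclideanSpace ℝ (Fin n) × ℝ => u p.1 p.2) q
        = deriv (fun s => u q.1 s) q.2 := (slice_t hsmooth q.2 q.1).symm
      _ = lap (fun y => u y q.2) q.1 := hheat q.1 q.2 hq
      _ = _ := lap_slice hsmooth q.2 q.1
  have hN : ContDiff ℝ (⊤ : ℕ∞) (fun q : EuclideanSpace ℝ (Fin n) × ℝ =>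
      ∑ i : Fin n, Dv (eps n i) (fun p : EuclideanSpace ℝ (Fin n) × ℝ => u p.1 p.2) q ^ 2) :=
    ContDiff.sum fun i _ => (Dv_contDiff hsmooth _).pow 2
  have hG : ContDiff ℝ (⊤ : ℕ∞) (fun q : EuclideanSpace ℝ (Fin n) × ℝ =>
      (∑ i : Fin n, Dv (eps n i) (fun p : EuclideanSpace ℝ (Fin n) × ℝ => u p.1 p.2) q ^ 2)
        / u q.1 q.2) :=
    hN.div hsmooth hF0
  have e1 : deriv (fun s => (∑ i : Fin n, (pd (fun y => u y s) x i) ^ 2) / u x s) t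
      = Dv (tau n) (fun q : EuclideanSpace ℝ (Fin n) × ℝ =>
          (∑ i : Fin n, Dv (eps n i) (fun p : EuclideanSpace ℝ (Fin n) × ℝ => u p.1 p.2) q ^ 2)
            / u q.1 q.2) (x, t) := by
    rw [show (fun s => (∑ i : Fin n, (pd (fun y => u y s) x i) ^ 2) / u x s)
        = fun s => (∑ i : Fin n, Dv (eps n i)
            (fun p : EuclideanSpace ℝ (Fin n) × ℝ => u p.1 p.2) (x, s) ^ 2) / u x s from
      funext fun s => by
        rw [Finset.sum_congr rfl fun i (_ : i ∈ Finset.univ) => by rw [hpd1 s x i]]]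
    exact slice_t hG t x
  have e2 : lap (fun y => (∑ i : Fin n, (pd (fun y' => u y' t) y i) ^ 2) / u y t) x
      = ∑ j : Fin n, Dv (eps n j) (Dv (eps n j)
          (fun q : EuclideanSpace ℝ (Fin n) × ℝ =>
            (∑ i : Fin n, Dv (eps n i) (fun p : EuclideanSpace ℝ (Fin n) × ℝ => u p.1 p.2) q ^ 2)
              / u q.1 q.2)) (x, t) := by
    rw [show (fun y => (∑ i : Fin n, (pd (fun y' => u y' t) y i) ^ 2) / u y t)
        = fun y => (∑ i : Fin n, Dv (eps n i)
            (fun p : EuclideanSpace ℝ (Fin n) × ℝ => u p.1 p.2) (y, t) ^ 2) / u y t from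
      funext fun y => by
        rw [Finset.sum_congr rfl fun i (_ : i ∈ Finset.univ) => by rw [hpd1 t y i]]]
    exact lap_slice hG t x
  rw [e1, e2, Finset.sum_congr rfl fun i (_ : i ∈ Finset.univ) =>
    Finset.sum_congr rfl fun j (_ : j ∈ Finset.univ) => by
      rw [hpd2 i j, hpd1 t x i, hpd1 t x j]]
  exact key hsmooth hF0 hheat' ht
end
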